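/- Let (Ω, P) be a probability space, d ≥ 1, M ≥ 1, and let u : Ω → EuclideanSpace ℝ (Fin d) be a measurable random vector with ‖u‖ ≤ 2R almost surely, R ≥ 0. Let B_0, …, B_{M−1} : Ω → Matrix (Fin d) (Fin d) ℝ be measurable random matrices with Frobenius norm ‖B_i‖_F ≤ 2 almost surely, and suppose there are constants Λ ≥ 0 and ρ ∈ [0,1) such that for all i ≠ j, E[trace(B_iᵀ B_j)] ≤ 4 Λ ρ^{|i−j|}. Then for every λ > 0, E⟨u, ((1/M) ∑_{i=0}^{M−1} B_i).mulVec u⟩ ≤ (λ/8) E‖u‖² + (32 R²/(λ M)) (1 + 2Λρ/(1−ρ)). -/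

import Mathlib

/-!
By Cauchy–Schwarz, `⟪u, S u⟫ ≤ ‖S‖_F ‖u‖²` for the averaged matrix `S = M⁻¹ ∑ Bᵢ`, and Young's
inequality splits this into `(λ/8) ‖u‖² + (8R²/λ) ‖S‖_F²`. Expanding
`‖S‖_F² = M⁻² ∑ᵢⱼ tr (Bᵢᵀ Bⱼ)`, each row `i` contributes in expectation at most `4` from the
diagonal and `4Λ ∑_{k ≠ 0} ρ^|k| = 8Λρ/(1-ρ)` from the off-diagonal terms, so
`E ‖S‖_F² ≤ (4/M) (1 + 2Λρ/(1-ρ))`.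
-/

open MeasureTheory Finset Matrix
open scoped RealInnerProductSpace Matrix.Norms.Frobenius

namespace Matrix

variable {m n : Type*} [Fintype m] [Fintype n]

theorem frobenius_norm_eq_sqrt (A : Matrix m n ℝ) : ‖A‖ = √(∑ i, ∑ j, A i j ^ 2) := by
  simp [frobenius_norm_def, Real.sqrt_eq_rpow]

theorem trace_transpose_mul_eq_sum {R : Type*} [NonUnitalNonAssocSemiring R]
    (A C : Matrix m n R) : trace (Aᵀ * C) = ∑ i, ∑ j, A i j * C i j := by
  simp only [trace, diag, mul_apply, transpose_apply]
  exact Finset.sum_comm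

theorem trace_transpose_mul_sum_sum {R ι κ : Type*} [NonUnitalNonAssocSemiring R]
    (s : Finset ι) (t : Finset κ) (A : ι → Matrix m n R) (C : κ → Matrix m n R) :
    trace ((∑ k ∈ s, A k)ᵀ * ∑ l ∈ t, C l) = ∑ k ∈ s, ∑ l ∈ t, trace ((A k)ᵀ * C l) := by
  simp only [transpose_sum, Matrix.sum_mul, Matrix.mul_sum, trace_sum]
  exact Finset.sum_comm

theorem frobenius_norm_sq_eq_trace (A : Matrix m n ℝ) : ‖A‖ ^ 2 = trace (Aᵀ * A) := by
  rw [frobenius_norm_eq_sqrt, Real.sq_sqrt (by positivity), trace_transpose_mul_eq_sum]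
  simp only [sq]

theorem frobenius_norm_sum_sq {ι : Type*} (s : Finset ι) (A : ι → Matrix m n ℝ) :
    ‖∑ k ∈ s, A k‖ ^ 2 = ∑ k ∈ s, ∑ l ∈ s, trace ((A k)ᵀ * A l) := by
  rw [frobenius_norm_sq_eq_trace, trace_transpose_mul_sum_sum]

theorem abs_trace_transpose_mul_le (A C : Matrix m n ℝ) : |trace (Aᵀ * C)| ≤ ‖A‖ * ‖C‖ := by
  -- The Frobenius norm is the norm of the Hilbert space `⨁ᵢ ℓ²(n)`, with inner product `tr (Aᵀ C)`.
  let flat : Matrix m n ℝ → PiLp 2 (fun _ : m => EuclideanSpace ℝ n) :=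
    fun A => WithLp.toLp 2 fun i => WithLp.toLp 2 (A i)
  have hinner : ⟪flat A, flat C⟫ = trace (Aᵀ * C) := by
    simp [flat, PiLp.inner_apply, trace_transpose_mul_eq_sum, mul_comm]
  rw [← hinner]
  exact abs_real_inner_le_norm (flat A) (flat C)

theorem frobenius_norm_mulVec_le {𝕜 : Type*} [RCLike 𝕜] (A : Matrix m n 𝕜)
    (v : EuclideanSpace 𝕜 n) : ‖WithLp.toLp 2 (A *ᵥ v)‖ ≤ ‖A‖ * ‖v‖ := by
  rw [← frobenius_norm_replicateCol (ι := Unit), replicateCol_mulVec]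
  exact (frobenius_norm_mul _ _).trans_eq (by rw [frobenius_norm_replicateCol])

theorem abs_inner_mulVec_le (A : Matrix n n ℝ) (v : EuclideanSpace ℝ n) :
    |⟪v, WithLp.toLp 2 (A *ᵥ v)⟫| ≤ ‖A‖ * ‖v‖ ^ 2 :=
  calc |⟪v, WithLp.toLp 2 (A *ᵥ v)⟫| ≤ ‖v‖ * (‖A‖ * ‖v‖) :=
        (abs_real_inner_le_norm _ _).trans (by gcongr; exact frobenius_norm_mulVec_le A v)
    _ = ‖A‖ * ‖v‖ ^ 2 := by ring

end Matrix

theorem hasSum_pow_natAbs {ρ : ℝ} (h0 : 0 ≤ ρ) (h1 : ρ < 1) :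
    HasSum (fun k : ℤ => ρ ^ k.natAbs) ((1 + ρ) / (1 - ρ)) := by
  have hpos : HasSum (fun n : ℕ => ρ ^ (n : ℤ).natAbs) (1 - ρ)⁻¹ := by
    simpa using hasSum_geometric_of_lt_one h0 h1
  have hneg : HasSum (fun n : ℕ => ρ ^ (-((n : ℤ) + 1)).natAbs) (ρ * (1 - ρ)⁻¹) := by
    have hshift : (fun n : ℕ => ρ ^ (-((n : ℤ) + 1)).natAbs) = fun n => ρ * ρ ^ n := by
      funext n; rw [← pow_succ']; congr 1
    exact hshift ▸ (hasSum_geometric_of_lt_one h0 h1).mul_left ρ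
  have hsplit : (1 + ρ) / (1 - ρ) = (1 - ρ)⁻¹ + ρ * (1 - ρ)⁻¹ := by
    have : 1 - ρ ≠ 0 := by linarith
    field_simp
  rw [hsplit]
  exact hpos.of_nat_of_neg_add_one hneg

theorem sum_fin_pow_natAbs_sub_le {ρ : ℝ} (h0 : 0 ≤ ρ) (h1 : ρ < 1) {M : ℕ} (i : Fin M) :
    ∑ j : Fin M, ρ ^ ((i : ℤ) - j).natAbs ≤ (1 + ρ) / (1 - ρ) := by
  have hinj : Function.Injective fun j : Fin M => (i : ℤ) - j := fun j k h => by
    simp only [sub_right_inj, Nat.cast_inj] at h; exact Fin.ext h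
  calc ∑ j : Fin M, ρ ^ ((i : ℤ) - j).natAbs = ∑ k ∈ univ.map ⟨_, hinj⟩, ρ ^ k.natAbs := by
        rw [sum_map]; rfl
    _ ≤ _ := sum_le_hasSum _ (fun _ _ => by positivity) (hasSum_pow_natAbs h0 h1)

theorem sum_le_of_offDiag_le_geometric {ρ a C : ℝ} (h0 : 0 ≤ ρ) (h1 : ρ < 1) (hC : 0 ≤ C)
    {M : ℕ} (c : Fin M → ℝ) (i : Fin M) (hdiag : c i ≤ a)
    (hoff : ∀ j, j ≠ i → c j ≤ C * ρ ^ ((i : ℤ) - j).natAbs) :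
    ∑ j, c j ≤ a + 2 * C * ρ / (1 - ρ) := by
  have hgeo : ∑ j ∈ univ.erase i, ρ ^ ((i : ℤ) - j).natAbs ≤ 2 * ρ / (1 - ρ) := by
    have := sum_fin_pow_natAbs_sub_le h0 h1 i
    rw [← add_sum_erase _ _ (mem_univ i), sub_self, Int.natAbs_zero, pow_zero] at this
    have h1ρ : 0 < 1 - ρ := by linarith
    calc _ ≤ (1 + ρ) / (1 - ρ) - 1 := by linarith
      _ = 2 * ρ / (1 - ρ) := by field_simp; ring
  rw [← add_sum_erase _ _ (mem_univ i)]
  calc c i + ∑ j ∈ univ.erase i, c j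
      ≤ a + ∑ j ∈ univ.erase i, C * ρ ^ ((i : ℤ) - j).natAbs :=
        add_le_add hdiag (sum_le_sum fun j hj => hoff j (ne_of_mem_erase hj))
    _ ≤ a + C * (2 * ρ / (1 - ρ)) := by rw [← mul_sum]; gcongr
    _ = a + 2 * C * ρ / (1 - ρ) := by ring

theorem mul_sq_le_young {s a R lam : ℝ} (hlam : 0 < lam) (ha0 : 0 ≤ a) (ha : a ≤ 2 * R) :
    s * a ^ 2 ≤ lam / 8 * a ^ 2 + 8 * R ^ 2 / lam * s ^ 2 := by
  have hamgm : s * a ^ 2 ≤ lam / 8 * a ^ 2 + 2 / lam * (s ^ 2 * a ^ 2) := by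
    have key : lam / 8 * a ^ 2 + 2 / lam * (s ^ 2 * a ^ 2) - s * a ^ 2
        = a ^ 2 * (lam - 4 * s) ^ 2 / (8 * lam) := by field_simp; ring
    have : 0 ≤ a ^ 2 * (lam - 4 * s) ^ 2 / (8 * lam) := by positivity
    linarith
  have ha2 : a ^ 2 ≤ 4 * R ^ 2 := by nlinarith
  calc s * a ^ 2 ≤ lam / 8 * a ^ 2 + 2 / lam * (s ^ 2 * a ^ 2) := hamgm
    _ ≤ lam / 8 * a ^ 2 + 2 / lam * (s ^ 2 * (4 * R ^ 2)) := by gcongr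
    _ = lam / 8 * a ^ 2 + 8 * R ^ 2 / lam * s ^ 2 := by ring

section RandomMatrices

variable {Ω : Type*} [MeasurableSpace Ω] {P : Measure Ω} {m n : Type*} [Fintype m] [Fintype n]

theorem aestronglyMeasurable_matrix_of_entries {R : Type*} [TopologicalSpace R] [Semiring R]
    [IsTopologicalSemiring R] {B : Ω → Matrix m n R}
    (hB : ∀ i j, AEStronglyMeasurable (fun ω => B ω i j) P) : AEStronglyMeasurable B P := by
  classical
  have hexpand : B = fun ω => ∑ i, ∑ j, B ω i j • single i j (1 : R) := by
    funext ω
    simpa only [smul_single, smul_eq_mul, mul_one] using matrix_eq_sum_single (B ω)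
  rw [hexpand]
  exact aestronglyMeasurable_fun_sum _ fun i _ =>
    aestronglyMeasurable_fun_sum _ fun j _ => (hB i j).smul_const _

theorem integrable_trace_transpose_mul [IsFiniteMeasure P] {A C : Ω → Matrix m n ℝ}
    (hA : AEStronglyMeasurable A P) (hC : AEStronglyMeasurable C P) {a c : ℝ}
    (hAa : ∀ᵐ ω ∂P, ‖A ω‖ ≤ a) (hCc : ∀ᵐ ω ∂P, ‖C ω‖ ≤ c) :
    Integrable (fun ω => trace ((A ω)ᵀ * C ω)) P := by
  have hcont : Continuous fun p : Matrix m n ℝ × Matrix m n ℝ => trace (p.1ᵀ * p.2) :=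
    (continuous_fst.matrix_transpose.matrix_mul continuous_snd).matrix_trace
  have hmeas := hcont.comp_aestronglyMeasurable (hA.prodMk hC)
  refine .of_bound hmeas (a * c) ?_
  filter_upwards [hAa, hCc] with ω ha hc
  exact (abs_trace_transpose_mul_le _ _).trans
    (mul_le_mul ha hc (norm_nonneg _) ((norm_nonneg _).trans ha))

variable {M : ℕ} {B : Fin M → Ω → Matrix m n ℝ} {b : ℝ}

theorem integrable_frobenius_norm_sum_sq [IsFiniteMeasure P]
    (hB : ∀ k, AEStronglyMeasurable (B k) P) (hBb : ∀ k, ∀ᵐ ω ∂P, ‖B k ω‖ ≤ b) :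
    Integrable (fun ω => ‖∑ k, B k ω‖ ^ 2) P := by
  simp_rw [frobenius_norm_sum_sq]
  exact integrable_finsetSum _ fun i _ => integrable_finsetSum _ fun j _ =>
    integrable_trace_transpose_mul (hB i) (hB j) (hBb i) (hBb j)

theorem integral_frobenius_norm_sum_sq_le [IsProbabilityMeasure P]
    (hB : ∀ k, AEStronglyMeasurable (B k) P) (hBb : ∀ k, ∀ᵐ ω ∂P, ‖B k ω‖ ≤ b)
    {C ρ : ℝ} (hC : 0 ≤ C) (hρ0 : 0 ≤ ρ) (hρ1 : ρ < 1)
    (hcorr : ∀ i j : Fin M, i ≠ j →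
      ∫ ω, trace ((B i ω)ᵀ * B j ω) ∂P ≤ C * ρ ^ ((i : ℤ) - (j : ℤ)).natAbs) :
    ∫ ω, ‖∑ k, B k ω‖ ^ 2 ∂P ≤ M * (b ^ 2 + 2 * C * ρ / (1 - ρ)) := by
  have hint : ∀ i j, Integrable (fun ω => trace ((B i ω)ᵀ * B j ω)) P := fun i j =>
    integrable_trace_transpose_mul (hB i) (hB j) (hBb i) (hBb j)
  have hdiag : ∀ i, ∫ ω, trace ((B i ω)ᵀ * B i ω) ∂P ≤ b ^ 2 := fun i => by
    have hii : Integrable (fun ω => ‖B i ω‖ ^ 2) P := by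
      simpa only [frobenius_norm_sq_eq_trace] using hint i i
    simp_rw [← frobenius_norm_sq_eq_trace]
    calc ∫ ω, ‖B i ω‖ ^ 2 ∂P ≤ ∫ _, b ^ 2 ∂P := by
          refine integral_mono_ae hii (integrable_const _) ?_
          filter_upwards [hBb i] with ω hω
          exact pow_le_pow_left₀ (norm_nonneg _) hω 2
      _ = b ^ 2 := by simp
  calc ∫ ω, ‖∑ k, B k ω‖ ^ 2 ∂P = ∑ i, ∑ j, ∫ ω, trace ((B i ω)ᵀ * B j ω) ∂P := by
        simp_rw [frobenius_norm_sum_sq]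
        rw [integral_finsetSum _ fun i _ => integrable_finsetSum _ fun j _ => hint i j]
        exact sum_congr rfl fun i _ => integral_finsetSum _ fun j _ => hint i j
    _ ≤ ∑ _i : Fin M, (b ^ 2 + 2 * C * ρ / (1 - ρ)) := sum_le_sum fun i _ =>
        sum_le_of_offDiag_le_geometric hρ0 hρ1 hC _ i (hdiag i) fun j hj => hcorr i j hj.symm
    _ = M * (b ^ 2 + 2 * C * ρ / (1 - ρ)) := by
        simp only [sum_const, card_univ, Fintype.card_fin, nsmul_eq_mul]

theorem integral_inner_mulVec_le_young [IsFiniteMeasure P] {S : Ω → Matrix n n ℝ}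
    {u : Ω → EuclideanSpace ℝ n} (hS : AEStronglyMeasurable S P)
    (hS2 : Integrable (fun ω => ‖S ω‖ ^ 2) P) (hu : AEStronglyMeasurable u P) {R lam : ℝ}
    (hubd : ∀ᵐ ω ∂P, ‖u ω‖ ≤ 2 * R) (hlam : 0 < lam) :
    ∫ ω, ⟪u ω, WithLp.toLp 2 (S ω *ᵥ u ω)⟫ ∂P
      ≤ lam / 8 * ∫ ω, ‖u ω‖ ^ 2 ∂P + 8 * R ^ 2 / lam * ∫ ω, ‖S ω‖ ^ 2 ∂P := by
  have hcont : Continuous fun p : Matrix n n ℝ × EuclideanSpace ℝ n =>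
      ⟪p.2, WithLp.toLp 2 (p.1 *ᵥ p.2)⟫ := by fun_prop
  have hquad := hcont.comp_aestronglyMeasurable (hS.prodMk hu)
  have hbound : ∀ᵐ ω ∂P, |⟪u ω, WithLp.toLp 2 (S ω *ᵥ u ω)⟫|
      ≤ lam / 8 * ‖u ω‖ ^ 2 + 8 * R ^ 2 / lam * ‖S ω‖ ^ 2 := by
    filter_upwards [hubd] with ω hω
    exact (abs_inner_mulVec_le _ _).trans (mul_sq_le_young hlam (norm_nonneg _) hω)
  have hu2 : Integrable (fun ω => ‖u ω‖ ^ 2) P := by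
    refine .of_bound (hu.norm.pow 2) ((2 * R) ^ 2) ?_
    filter_upwards [hubd] with ω hω
    rw [norm_pow, norm_norm]
    exact pow_le_pow_left₀ (norm_nonneg _) hω 2
  have hmajorant := (hu2.const_mul (lam / 8)).add (hS2.const_mul (8 * R ^ 2 / lam))
  calc _ ≤ ∫ ω, lam / 8 * ‖u ω‖ ^ 2 + 8 * R ^ 2 / lam * ‖S ω‖ ^ 2 ∂P :=
        integral_mono_ae (hmajorant.mono' hquad hbound) hmajorant
          (hbound.mono fun ω hω => (le_abs_self _).trans hω)
    _ = _ := by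
        rw [integral_add (hu2.const_mul _) (hS2.const_mul _), integral_const_mul,
          integral_const_mul]

end RandomMatrices

theorem markovian_quadratic_noise_bound_general
    {Ω : Type*} [MeasurableSpace Ω] (P : Measure Ω) [IsProbabilityMeasure P]
    (d : ℕ) (M : ℕ)
    (u : Ω → EuclideanSpace ℝ (Fin d))
    (B : Fin M → Ω → Matrix (Fin d) (Fin d) ℝ)
    (humeas : AEStronglyMeasurable u P)
    (hBmeas : ∀ k i j, AEStronglyMeasurable (fun ω => B k ω i j) P)
    (R : ℝ)
    (hubd : ∀ᵐ ω ∂P, ‖u ω‖ ≤ 2 * R)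
    (hBbd : ∀ k, ∀ᵐ ω ∂P, Real.sqrt (∑ i, ∑ j, (B k ω i j) ^ 2) ≤ 2)
    (Λ ρ : ℝ) (hΛ : 0 ≤ Λ) (hρ0 : 0 ≤ ρ) (hρ1 : ρ < 1)
    (hcorr : ∀ i j : Fin M, i ≠ j →
      ∫ ω, Matrix.trace ((B i ω).transpose * B j ω) ∂P
        ≤ 4 * Λ * ρ ^ ((i : ℤ) - (j : ℤ)).natAbs)
    (lam : ℝ) (hlam : 0 < lam) :
    ∫ ω, ⟪u ω, (WithLp.equiv 2 (Fin d → ℝ)).symm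
        (((M : ℝ)⁻¹ • ∑ i, B i ω).mulVec (u ω))⟫ ∂P
      ≤ (lam / 8) * ∫ ω, ‖u ω‖ ^ 2 ∂P
        + (32 * R ^ 2 / (lam * M)) * (1 + 2 * Λ * ρ / (1 - ρ)) := by
  simp only [WithLp.equiv_symm_apply]
  have hB : ∀ k, AEStronglyMeasurable (B k) P := fun k =>
    aestronglyMeasurable_matrix_of_entries (hBmeas k)
  have hBbd' : ∀ k, ∀ᵐ ω ∂P, ‖B k ω‖ ≤ 2 := by simpa only [← frobenius_norm_eq_sqrt] using hBbd
  have hSsq : ∀ ω, ‖(M : ℝ)⁻¹ • ∑ k, B k ω‖ ^ 2 = (M : ℝ)⁻¹ ^ 2 * ‖∑ k, B k ω‖ ^ 2 := fun ω => by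
    simp [norm_smul, mul_pow]
  have hS2 : Integrable (fun ω => ‖(M : ℝ)⁻¹ • ∑ k, B k ω‖ ^ 2) P := by
    simpa only [hSsq] using (integrable_frobenius_norm_sum_sq hB hBbd').const_mul _
  calc _ ≤ lam / 8 * ∫ ω, ‖u ω‖ ^ 2 ∂P
          + 8 * R ^ 2 / lam * ∫ ω, ‖(M : ℝ)⁻¹ • ∑ k, B k ω‖ ^ 2 ∂P :=
        integral_inner_mulVec_le_young
          ((aestronglyMeasurable_fun_sum _ fun k _ => hB k).fun_const_smul _) hS2 humeas hubd hlam
    _ ≤ lam / 8 * ∫ ω, ‖u ω‖ ^ 2 ∂P + 8 * R ^ 2 / lam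
          * ((M : ℝ)⁻¹ ^ 2 * (M * (2 ^ 2 + 2 * (4 * Λ) * ρ / (1 - ρ)))) := by
        simp only [hSsq, integral_const_mul]
        gcongr
        exact integral_frobenius_norm_sum_sq_le hB hBbd' (by positivity) hρ0 hρ1 hcorr
    _ = _ := by
        rcases eq_or_ne (M : ℝ) 0 with hM | hM
        · simp [hM]
        · field_simp
          ring

/-- Markovian-noise bound for a quadratic term: if `‖u‖ ≤ 2R` a.s., each random matrix
`B i` has Frobenius norm at most `2` a.s., and the trace inner products of distinct
matrices decay geometrically, then
`E⟪u, ((1/M) ∑ B i) u⟫ ≤ (λ/8) E‖u‖² + (32R²/(λM))(1 + 2Λρ/(1−ρ))`. -/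
theorem markovian_quadratic_noise_bound
    {Ω : Type*} [MeasurableSpace Ω] (P : Measure Ω) [IsProbabilityMeasure P]
    (d : ℕ) (hd : 1 ≤ d) (M : ℕ) (hM : 1 ≤ M)
    (u : Ω → EuclideanSpace ℝ (Fin d))
    (B : Fin M → Ω → Matrix (Fin d) (Fin d) ℝ)
    (humeas : AEStronglyMeasurable u P)
    (hBmeas : ∀ k i j, AEStronglyMeasurable (fun ω => B k ω i j) P)
    (R : ℝ) (hR : 0 ≤ R)
    (hubd : ∀ᵐ ω ∂P, ‖u ω‖ ≤ 2 * R)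
    (hBbd : ∀ k, ∀ᵐ ω ∂P, Real.sqrt (∑ i, ∑ j, (B k ω i j) ^ 2) ≤ 2)
    (Λ ρ : ℝ) (hΛ : 0 ≤ Λ) (hρ0 : 0 ≤ ρ) (hρ1 : ρ < 1)
    (hcorr : ∀ i j : Fin M, i ≠ j →
      ∫ ω, Matrix.trace ((B i ω).transpose * B j ω) ∂P
        ≤ 4 * Λ * ρ ^ ((i : ℤ) - (j : ℤ)).natAbs)
    (lam : ℝ) (hlam : 0 < lam) :
    ∫ ω, ⟪u ω, (WithLp.equiv 2 (Fin d → ℝ)).symm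
        (((M : ℝ)⁻¹ • ∑ i, B i ω).mulVec (u ω))⟫ ∂P
      ≤ (lam / 8) * ∫ ω, ‖u ω‖ ^ 2 ∂P
        + (32 * R ^ 2 / (lam * M)) * (1 + 2 * Λ * ρ / (1 - ρ)) :=
  markovian_quadratic_noise_bound_general P d M u B humeas hBmeas R hubd hBbd Λ ρ hΛ hρ0 hρ1 hcorr
    lam hlam
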